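/- Let n = 2k+3 for k ≥ 0. The chain S_1 ⊂ ⋯ ⊂ S_{k+1} where S_i = {1, 2, …, i} ∪ {n−i+1, …, n} is a maximal face of the h-complex Δ_n of dimension k (corresponding to the block decomposition 1,n | 2,n−1 | ⋯ | (n−1)/2, (n+3)/2 | (n+1)/2). -/

import Mathlib

/-!
With the sentinels adjoined, the blocks `Sᵢ \ Sᵢ₋₁` of the chain are the pairs
`{i, n + 1 - i}` followed by the middle singleton, and consecutive blocks descend because
`n + 1 - i > i + 1`. A face containing the chain consists of sets comparable with every `Sᵢ`,
so any further set splits a pair `{i, n + 1 - i}` into two consecutive singleton blocks. The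
descent condition forces the order `{n + 1 - i}, {i}`; as `n` is odd, `Sᵢ` is not the last set,
and the block after `{i}` lies in `{i + 1, n - i}`, so `{i}` cannot descend into it.
-/

/-- The chain `L` of subsets of `{1,…,n}` (encoded as `Finset (Fin n)`) with the
sentinels `S₀ = ∅` and `S_{j+1} = univ` adjoined. -/
def withSent (n : ℕ) (L : List (Finset (Fin n))) : List (Finset (Fin n)) :=
  (∅ :: L) ++ [Finset.univ]

/-- `L` is a face of the h-complex `Δₙ` of the truncated Boolean algebra: a strictly
increasing chain of proper nonempty subsets such that, with sentinels adjoined,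
every consecutive pair of blocks has `max (S_i \ S_{i-1}) > min (S_{i+1} \ S_i)`
(expressed as: some element of the lower difference exceeds some element of the
upper difference, which is equivalent since max ≥ a and min ≤ c). -/
def IsFace (n : ℕ) (L : List (Finset (Fin n))) : Prop :=
  (withSent n L).Chain' (· ⊂ ·) ∧
  ∀ i, ∀ h : i + 2 < (withSent n L).length,
    ∃ a ∈ (withSent n L).get ⟨i + 1, by omega⟩ \ (withSent n L).get ⟨i, by omega⟩,
      ∃ c ∈ (withSent n L).get ⟨i + 2, h⟩ \ (withSent n L).get ⟨i + 1, by omega⟩, c < a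

open Finset

namespace List.SortedLT

variable {α : Type*} [Preorder α] {l : List α}

theorem getElem_le_getElem_iff' (hl : l.SortedLT) {i j : ℕ} {hi : i < l.length}
    {hj : j < l.length} : l[i] ≤ l[j] ↔ i ≤ j :=
  hl.strictMono_get.le_iff_le

theorem getElem_lt_getElem_iff' (hl : l.SortedLT) {i j : ℕ} {hi : i < l.length}
    {hj : j < l.length} : l[i] < l[j] ↔ i < j :=
  hl.strictMono_get.lt_iff_lt

theorem lt_of_not_le_of_mem (hl : l.SortedLT) {x y : α} (hx : x ∈ l) (hy : y ∈ l)
    (h : ¬y ≤ x) : x < y := by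
  obtain ⟨i, hi, rfl⟩ := List.getElem_of_mem hx
  obtain ⟨j, hj, rfl⟩ := List.getElem_of_mem hy
  rw [hl.getElem_le_getElem_iff', not_le] at h
  exact hl.getElem_lt_getElem_iff'.2 h

end List.SortedLT

section Descents

variable {α : Type*} [LinearOrder α]

def Descends (D E : Finset α) : Prop :=
  ∃ a ∈ D, ∃ c ∈ E, c < a

theorem Descends.mono {D D' E E' : Finset α} (h : Descends D E) (hD : D ⊆ D') (hE : E ⊆ E') :
    Descends D' E' := by
  obtain ⟨a, ha, c, hc, hca⟩ := h
  exact ⟨a, hD ha, c, hE hc, hca⟩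

def HasDescents (W : List (Finset α)) : Prop :=
  ∀ m (h : m + 2 < W.length), Descends (W[m + 1] \ W[m]) (W[m + 2] \ W[m + 1])

end Descents

theorem isFace_iff {n : ℕ} {L : List (Finset (Fin n))} :
    IsFace n L ↔ (withSent n L).SortedLT ∧ HasDescents (withSent n L) := by
  rw [IsFace, List.sortedLT_iff_isChain]
  rfl

theorem withSent_injective (n : ℕ) : Function.Injective (withSent n) := by
  intro L L' h
  simpa [withSent] using h

theorem withSent_sublist_withSent {n : ℕ} {L L' : List (Finset (Fin n))} (h : L.Sublist L') :
    (withSent n L).Sublist (withSent n L') :=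
  (h.cons_cons ∅).append (List.Sublist.refl _)

section Outer

variable {n i j : ℕ} {x : Fin n} {A B : Finset (Fin n)}

/-- `{1, …, j} ∪ {n - j + 1, …, n}`, with `Fin n` encoding `x + 1` as `x`. -/
def outer (n j : ℕ) : Finset (Fin n) :=
  univ.filter fun x => (x : ℕ) < j ∨ n - j ≤ x

@[simp]
theorem mem_outer : x ∈ outer n j ↔ (x : ℕ) < j ∨ n - j ≤ x := by
  simp [outer]

@[simp]
theorem outer_zero : outer n 0 = ∅ := by
  ext x
  simp [x.isLt]

theorem outer_eq_univ (h : n ≤ 2 * j) : outer n j = univ := by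
  ext x
  simp only [mem_outer, mem_univ, iff_true]
  omega

theorem outer_mono : Monotone (outer n) := by
  intro i j hij x
  simp only [mem_outer]
  omega

theorem le_of_notMem_outer (hx : x ∉ outer n j) : j ≤ x := by
  simp only [mem_outer, not_or] at hx
  omega

theorem eq_or_eq_of_mem_outer_succ_sdiff (hx : x ∈ outer n (j + 1) \ outer n j) :
    (x : ℕ) = j ∨ (x : ℕ) = n - 1 - j := by
  simp only [mem_sdiff, mem_outer] at hx
  omega

theorem outer_lt_outer_succ (h : 2 * j < n) : outer n j < outer n (j + 1) := by
  refine (outer_mono j.le_succ).lt_of_not_ge fun hle => ?_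
  have hj : (⟨j, by omega⟩ : Fin n) ∈ outer n j := hle (by simp)
  simp only [mem_outer] at hj
  omega

theorem descends_outer_succ_sdiff (h : 2 * j + 2 < n) :
    Descends (outer n (j + 1) \ outer n j) (outer n (j + 2) \ outer n (j + 1)) :=
  ⟨⟨n - 1 - j, by omega⟩, by simp; omega, ⟨j + 1, by omega⟩, by simp; omega,
    Fin.mk_lt_mk.2 (by omega)⟩

theorem not_descends_sdiff_outer_succ {D : Finset (Fin n)} (hD : ∀ x ∈ D, (x : ℕ) ≤ j) :
    ¬Descends D (B \ outer n (j + 1)) := by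
  rintro ⟨a, ha, c, hc, hca⟩
  have := le_of_notMem_outer (mem_sdiff.1 hc).2
  have := hD a ha
  rw [Fin.lt_def] at hca
  omega

/-- Splitting the block `{i, n - 1 - i}` by a descent forces the order `n - 1 - i`, then `i`. -/
theorem outer_succ_eq_of_descends (hiA : outer n i ⊆ A) (hAB : A ⊆ B)
    (hB : B ⊆ outer n (i + 1)) (hd : Descends (A \ outer n i) (B \ A)) :
    B = outer n (i + 1) ∧ (∀ x ∈ B \ A, (x : ℕ) = i) ∧ 2 * i + 1 < n := by
  obtain ⟨a, ha, c, hc, hca⟩ := hd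
  rw [mem_sdiff] at ha hc
  have hblock {x} (hx : x ∈ outer n (i + 1)) (hxi : x ∉ outer n i) :
      i ≤ x ∧ ((x : ℕ) = i ∨ (x : ℕ) = n - 1 - i) :=
    ⟨le_of_notMem_outer hxi, eq_or_eq_of_mem_outer_succ_sdiff (mem_sdiff.2 ⟨hx, hxi⟩)⟩
  have ha' := hblock (hB (hAB ha.1)) ha.2
  have hc' := hblock (hB hc.1) fun h => hc.2 (hiA h)
  rw [Fin.lt_def] at hca
  have hx_eq {x} (hx : x ∈ outer n (i + 1)) (hxi : x ∉ outer n i) : x = a ∨ x = c := by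
    have := hblock hx hxi
    simp only [Fin.ext_iff]
    omega
  refine ⟨hB.antisymm fun x hx => ?_, fun x hx => ?_, by omega⟩
  · by_cases hxi : x ∈ outer n i
    · exact hAB (hiA hxi)
    · obtain rfl | rfl := hx_eq hx hxi
      exacts [hAB ha.1, hc.1]
  · rw [mem_sdiff] at hx
    obtain rfl | rfl := hx_eq (hB hx.1) fun h => hx.2 (hiA h)
    exacts [(hx.2 ha.1).elim, by omega]

variable {W : List (Finset (Fin n))}

theorem not_outer_lt_lt_outer_succ (hn : Odd n) (hW : W.SortedLT) (hd : HasDescents W)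
    (hU : ∀ j, outer n j ∈ W) (hA : A ∈ W) (h₁ : outer n i < A)
    (h₂ : A < outer n (i + 1)) : False := by
  obtain ⟨m, hm, rfl⟩ := List.getElem_of_mem hA
  obtain ⟨p, hp, hWp⟩ := List.getElem_of_mem (hU i)
  obtain ⟨q, hq, hWq⟩ := List.getElem_of_mem (hU (i + 1))
  obtain ⟨r, hr, hWr⟩ := List.getElem_of_mem (hU (i + 2))
  rw [← hWp, hW.getElem_lt_getElem_iff'] at h₁
  rw [← hWq, hW.getElem_lt_getElem_iff'] at h₂
  obtain ⟨m, rfl⟩ : ∃ m', m = m' + 1 := ⟨m - 1, by omega⟩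
  have hle {a b : ℕ} (ha : a < W.length) (hb : b < W.length) (hab : a ≤ b) : W[a] ⊆ W[b] :=
    hW.getElem_le_getElem_iff'.2 hab
  have hiA : outer n i ⊆ W[m + 1] := hWp ▸ hle hp hm h₁.le
  have hBi : W[m + 2] ⊆ outer n (i + 1) := hWq ▸ hle (by omega) hq h₂
  have hiP : outer n i ⊆ W[m] := hWp ▸ hle hp (by omega) (by omega)
  obtain ⟨hsucc, hblock, hi⟩ := outer_succ_eq_of_descends hiA (hle hm (by omega) (by omega)) hBi
    ((hd m (by omega)).mono (sdiff_subset_sdiff le_rfl hiP) le_rfl)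
  have hr' : m + 2 < r := by
    refine (hW.getElem_lt_getElem_iff' (hi := by omega) (hj := hr)).1 ?_
    rw [hsucc, hWr]
    -- oddness excludes `n = 2 * i + 2`, where `outer n (i + 1)` would be the last set
    obtain ⟨k, rfl⟩ := hn
    exact outer_lt_outer_succ (by omega)
  refine not_descends_sdiff_outer_succ (B := W[m + 3]) (fun x hx => (hblock x hx).le) ?_
  rw [← hsucc]
  exact hd (m + 1) (by omega)

theorem exists_eq_outer_of_mem (hn : Odd n) (hW : W.SortedLT) (hd : HasDescents W)
    (hU : ∀ j, outer n j ∈ W) (hA : A ∈ W) : ∃ j, A = outer n j := by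
  let i := Nat.findGreatest (fun j => outer n j ≤ A) n
  have hi : outer n i ≤ A :=
    Nat.findGreatest_spec (P := fun j => outer n j ≤ A) (Nat.zero_le n) (by simp)
  by_cases hin : n ≤ 2 * i
  · exact ⟨i, (hi.antisymm (outer_eq_univ hin ▸ subset_univ A)).symm⟩
  have hA₂ : A < outer n (i + 1) := hW.lt_of_not_le_of_mem hA (hU _)
    (Nat.findGreatest_is_greatest (Nat.lt_succ_self i) (by omega))
  obtain h | h := hi.lt_or_eq
  · exact (not_outer_lt_lt_outer_succ hn hW hd hU hA h hA₂).elim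
  · exact ⟨i, h.symm⟩

end Outer

section OuterChain

variable (k : ℕ)

def outerChain : List (Finset (Fin (2 * k + 3))) :=
  List.ofFn fun j : Fin (k + 3) => outer (2 * k + 3) j

theorem sortedLT_outerChain : (outerChain k).SortedLT :=
  List.sortedLT_ofFn_iff.2 <| Fin.strictMono_iff_lt_succ.2 fun j =>
    outer_lt_outer_succ (by simp only [Fin.val_castSucc]; omega)

theorem hasDescents_outerChain : HasDescents (outerChain k) := fun m hm => by
  rw [outerChain, List.length_ofFn] at hm
  simp only [outerChain, List.getElem_ofFn]
  exact descends_outer_succ_sdiff (by omega)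

theorem outer_mem_outerChain (j : ℕ) : outer (2 * k + 3) j ∈ outerChain k := by
  rw [outerChain, List.mem_ofFn]
  by_cases hj : j < k + 3
  · exact ⟨⟨j, hj⟩, rfl⟩
  · exact ⟨Fin.last _, by rw [outer_eq_univ (by simp; omega), outer_eq_univ (by omega)]⟩

theorem withSent_eq_outerChain :
    withSent (2 * k + 3) (List.ofFn fun i : Fin (k + 1) => outer (2 * k + 3) (i + 1)) =
      outerChain k := by
  rw [outerChain, List.ofFn_succ, List.ofFn_succ']
  simp [withSent, outer_eq_univ (n := 2 * k + 3) (j := k + 2) (by omega)]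

end OuterChain

/-- for `n = 2k+3`, the chain `S₁ ⊂ ⋯ ⊂ S_{k+1}` with
`Sᵢ = {1,…,i} ∪ {n-i+1,…,n}` (block decomposition
`1,n | 2,n-1 | ⋯ | (n-1)/2,(n+3)/2 | (n+1)/2`) is a maximal face of `Δₙ` of
dimension `k`.  In the 0-indexed `Fin n` encoding (value `x` for number `x+1`,
index `i : Fin (k+1)` for the 1-indexed `i+1`), `Sᵢ` reads
`x < i+1 ∨ n - (i+1) ≤ x`. -/
theorem maximal_face_n_eq_2k3 (k : ℕ) (L : List (Finset (Fin (2 * k + 3))))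
    (hL : L = List.ofFn fun i : Fin (k + 1) =>
      Finset.univ.filter fun x : Fin (2 * k + 3) =>
        (x : ℕ) < (i : ℕ) + 1 ∨ 2 * k + 3 - ((i : ℕ) + 1) ≤ (x : ℕ)) :
    IsFace (2 * k + 3) L ∧ L.length = k + 1 ∧
      ∀ L', IsFace (2 * k + 3) L' → L.Sublist L' → L' = L := by
  have hW : withSent (2 * k + 3) L = outerChain k := hL ▸ withSent_eq_outerChain k
  refine ⟨isFace_iff.2 ⟨hW ▸ sortedLT_outerChain k, hW ▸ hasDescents_outerChain k⟩,
    by simp [hL], fun L' hL' hsub => ?_⟩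
  obtain ⟨hW', hd'⟩ := isFace_iff.1 hL'
  have hsub' : outerChain k ⊆ withSent (2 * k + 3) L' :=
    hW ▸ (withSent_sublist_withSent hsub).subset
  have hsup : withSent (2 * k + 3) L' ⊆ outerChain k := fun A hA => by
    obtain ⟨j, rfl⟩ := exists_eq_outer_of_mem ⟨k + 1, by ring⟩ hW' hd'
      (fun j => hsub' (outer_mem_outerChain k j)) hA
    exact outer_mem_outerChain k j
  exact withSent_injective _ <|
    (hsup.antisymm_of_sortedLT hsub' hW' (sortedLT_outerChain k)).trans hW.symm
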